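/- The k-support norm is a norm on ℝ^d, i.e. it is positive definite, absolutely homogeneous, and satisfies the triangle inequality. -/

import Mathlib

/-!
Admissible decompositions of `w` and `z` add up to an admissible decomposition of `w + z`, and
scale to one of `a • w`; since the cost `Σ_I ‖v_I‖₂` is subadditive and absolutely homogeneous
in `v`, so is its infimum. Definiteness comes from `|w i| ≤ Σ_I |v_I i| ≤ Σ_I ‖v_I‖₂`, and for
`k ≥ 1` the splitting of `w` along singletons shows that the infimum is over a nonempty set.
-/

noncomputable section

/-- The k-support norm: infimum of `Σ_I ‖v_I‖₂` over decompositions `w = Σ_I v_I`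
where each `v_I` is supported on `I` with `|I| ≤ k`. -/
def ksup {d : ℕ} (k : ℕ) (w : Fin d → ℝ) : ℝ :=
  sInf {s : ℝ | ∃ v : Finset (Fin d) → (Fin d → ℝ),
    (∀ I i, v I i ≠ 0 → i ∈ I ∧ I.card ≤ k) ∧
    (∑ I : Finset (Fin d), v I) = w ∧
    s = ∑ I : Finset (Fin d), Real.sqrt (∑ i, (v I i) ^ 2)}

open Finset Pointwise

lemma sqrt_sum_sq_eq_norm_toLp {ι : Type*} [Fintype ι] (x : ι → ℝ) :
    √(∑ i, x i ^ 2) = ‖WithLp.toLp 2 x‖ := by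
  simp [EuclideanSpace.norm_eq]

namespace KSupport

variable {d : ℕ} {k : ℕ}

def costs (k : ℕ) (w : Fin d → ℝ) : Set ℝ :=
  {s | ∃ v : Finset (Fin d) → Fin d → ℝ,
    (∀ I i, v I i ≠ 0 → i ∈ I ∧ I.card ≤ k) ∧
    ∑ I, v I = w ∧
    s = ∑ I, ‖WithLp.toLp 2 (v I)‖}

lemma ksup_eq_sInf_costs (k : ℕ) (w : Fin d → ℝ) : ksup k w = sInf (costs k w) := by
  simp only [ksup, costs, sqrt_sum_sq_eq_norm_toLp]

lemma costs_nonempty (hk : 1 ≤ k) (w : Fin d → ℝ) : (costs k w).Nonempty := by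
  refine ⟨_, fun I i => if I = {i} then w i else 0, fun I i h => ?_, ?_, rfl⟩
  · obtain rfl : I = {i} := by by_contra hI; simp [hI] at h
    simp [hk]
  · ext i
    simp [Finset.sum_apply]

lemma nonneg_of_mem_costs {w : Fin d → ℝ} {s : ℝ} (hs : s ∈ costs k w) : 0 ≤ s := by
  obtain ⟨v, -, -, rfl⟩ := hs
  positivity

lemma bddBelow_costs (k : ℕ) (w : Fin d → ℝ) : BddBelow (costs k w) :=
  ⟨0, fun _ => nonneg_of_mem_costs⟩

lemma zero_mem_costs (k : ℕ) : (0 : ℝ) ∈ costs k (0 : Fin d → ℝ) :=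
  ⟨0, fun _ _ h => absurd rfl h, by simp, by simp⟩

lemma abs_apply_le_of_mem_costs {w : Fin d → ℝ} {s : ℝ} (hs : s ∈ costs k w) (i : Fin d) :
    |w i| ≤ s := by
  obtain ⟨v, -, rfl, rfl⟩ := hs
  calc |(∑ I, v I) i| = |∑ I, v I i| := by rw [Finset.sum_apply]
    _ ≤ ∑ I, |v I i| := abs_sum_le_sum_abs _ _
    _ ≤ ∑ I, ‖WithLp.toLp 2 (v I)‖ :=
        sum_le_sum fun I _ => PiLp.norm_apply_le (WithLp.toLp 2 (v I)) i

lemma smul_costs_subset (a : ℝ) (w : Fin d → ℝ) : |a| • costs k w ⊆ costs k (a • w) := by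
  rintro _ ⟨_, ⟨v, hv, rfl, rfl⟩, rfl⟩
  refine ⟨fun I => a • v I, fun I i h => hv I i fun h0 => h (by simp [h0]), ?_, ?_⟩
  · simp [Finset.smul_sum]
  · simp [Finset.mul_sum, norm_smul]

lemma exists_mem_costs_add_le {w z : Fin d → ℝ} {s : ℝ} (hs : s ∈ costs k w + costs k z) :
    ∃ t ∈ costs k (w + z), t ≤ s := by
  obtain ⟨_, ⟨v, hv, rfl, rfl⟩, _, ⟨u, hu, rfl, rfl⟩, rfl⟩ := hs
  refine ⟨_, ⟨v + u, fun I i h => ?_, by simp [Finset.sum_add_distrib], rfl⟩, ?_⟩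
  · by_cases hvI : v I i = 0
    · exact hu I i fun huI => h (by simp [hvI, huI])
    · exact hv I i hvI
  · exact (sum_le_sum fun I _ => norm_add_le (WithLp.toLp 2 (v I)) (WithLp.toLp 2 (u I))).trans_eq
      sum_add_distrib

lemma ksup_nonneg (k : ℕ) (w : Fin d → ℝ) : 0 ≤ ksup k w := by
  rw [ksup_eq_sInf_costs]
  exact Real.sInf_nonneg fun _ => nonneg_of_mem_costs

lemma ksup_zero (k : ℕ) : ksup k (0 : Fin d → ℝ) = 0 := by
  refine le_antisymm ?_ (ksup_nonneg k 0)
  rw [ksup_eq_sInf_costs]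
  exact csInf_le (bddBelow_costs k 0) (zero_mem_costs k)

lemma abs_apply_le_ksup (hk : 1 ≤ k) (w : Fin d → ℝ) (i : Fin d) : |w i| ≤ ksup k w := by
  rw [ksup_eq_sInf_costs]
  exact le_csInf (costs_nonempty hk w) fun _ hs => abs_apply_le_of_mem_costs hs i

lemma ksup_eq_zero_iff (hk : 1 ≤ k) (w : Fin d → ℝ) : ksup k w = 0 ↔ w = 0 := by
  refine ⟨fun h => funext fun i => ?_, fun h => h ▸ ksup_zero k⟩
  simpa [h] using abs_apply_le_ksup hk w i

lemma ksup_smul_le (hk : 1 ≤ k) (a : ℝ) (w : Fin d → ℝ) :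
    ksup k (a • w) ≤ |a| * ksup k w := by
  rw [ksup_eq_sInf_costs, ksup_eq_sInf_costs, ← smul_eq_mul,
    ← Real.sInf_smul_of_nonneg (abs_nonneg a)]
  exact csInf_le_csInf (bddBelow_costs k _) ((costs_nonempty hk w).smul_set)
    (smul_costs_subset a w)

lemma ksup_smul (hk : 1 ≤ k) (a : ℝ) (w : Fin d → ℝ) : ksup k (a • w) = |a| * ksup k w := by
  rcases eq_or_ne a 0 with rfl | ha
  · simp [ksup_zero]
  refine le_antisymm (ksup_smul_le hk a w) ?_
  have h := ksup_smul_le hk a⁻¹ (a • w)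
  rwa [inv_smul_smul₀ ha, abs_inv, ← div_eq_inv_mul, le_div_iff₀' (abs_pos.2 ha)] at h

lemma ksup_add_le (hk : 1 ≤ k) (w z : Fin d → ℝ) : ksup k (w + z) ≤ ksup k w + ksup k z := by
  simp only [ksup_eq_sInf_costs]
  rw [← csInf_add (costs_nonempty hk w) (bddBelow_costs k w) (costs_nonempty hk z)
    (bddBelow_costs k z)]
  refine le_csInf ((costs_nonempty hk w).add (costs_nonempty hk z)) fun s hs => ?_
  obtain ⟨t, ht, hts⟩ := exists_mem_costs_add_le hs
  exact (csInf_le (bddBelow_costs k _) ht).trans hts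

end KSupport

open KSupport in
theorem ksup_is_norm_general {d : ℕ} (k : ℕ) (hk1 : 1 ≤ k) :
    (∀ w : Fin d → ℝ, 0 ≤ ksup k w) ∧
    (∀ w : Fin d → ℝ, ksup k w = 0 ↔ w = 0) ∧
    (∀ (a : ℝ) (w : Fin d → ℝ), ksup k (a • w) = |a| * ksup k w) ∧
    (∀ w z : Fin d → ℝ, ksup k (w + z) ≤ ksup k w + ksup k z) :=
  ⟨ksup_nonneg k, ksup_eq_zero_iff hk1, ksup_smul hk1, ksup_add_le hk1⟩

/-- The k-support norm is a norm: nonnegative, positive definite, absolutely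
homogeneous, and satisfies the triangle inequality. -/
theorem ksup_is_norm {d : ℕ} (k : ℕ) (hk1 : 1 ≤ k) (hk2 : k ≤ d) :
    (∀ w : Fin d → ℝ, 0 ≤ ksup k w) ∧
    (∀ w : Fin d → ℝ, ksup k w = 0 ↔ w = 0) ∧
    (∀ (a : ℝ) (w : Fin d → ℝ), ksup k (a • w) = |a| * ksup k w) ∧
    (∀ w z : Fin d → ℝ, ksup k (w + z) ≤ ksup k w + ksup k z) :=
  ksup_is_norm_general k hk1
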